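/- arXiv:1901.02304 — 2 statements merged into one kernel-verified Lean document; each statement's English description precedes it below -/
import Mathlib

section
/- Define I(α) = Q + PQ − Σ_{i<j}(pᵢqⱼ − pⱼqᵢ) − P² − e(α) for data as above, where 0 ≤ e(α) ≤ Q. Then I(α) ≥ 0. -/
open Finset

/-!
Write `rᵢ = qᵢ - pᵢ ≥ 0`. Since `pⱼqᵢ ≥ pⱼpᵢ`, every term of the sum over `i < j` is at most
`pᵢrⱼ`, and `Σ_{i<j} pᵢrⱼ ≤ (Σ pᵢ)(Σ rⱼ) = PQ - P²` because all products `pᵢrⱼ` are nonnegative.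
Hence `I(α) ≥ Q - e(α) ≥ 0`.
-/

section

variable {ι R : Type*} [Fintype ι] [LinearOrder ι] [LocallyFiniteOrderTop ι]
  [CommRing R] [LinearOrder R] [IsStrictOrderedRing R]

theorem sum_sum_Ioi_mul_le_sum_mul_sum {f g : ι → R} (hf : ∀ i, 0 ≤ f i) (hg : ∀ i, 0 ≤ g i) :
    ∑ i, ∑ j ∈ Ioi i, f i * g j ≤ (∑ i, f i) * ∑ j, g j := by
  rw [sum_mul_sum]
  exact sum_le_sum fun i _ => sum_le_sum_of_subset_of_nonneg (subset_univ _)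
    fun j _ _ => mul_nonneg (hf i) (hg j)

theorem sum_sum_Ioi_cross_le {p q : ι → R} (hp : ∀ i, 0 ≤ p i) (hpq : ∀ i, p i ≤ q i) :
    ∑ i, ∑ j ∈ Ioi i, (p i * q j - p j * q i) ≤ (∑ i, p i) * (∑ i, q i) - (∑ i, p i) ^ 2 :=
  calc ∑ i, ∑ j ∈ Ioi i, (p i * q j - p j * q i)
      ≤ ∑ i, ∑ j ∈ Ioi i, p i * (q j - p j) := by
        gcongr with i _ j _
        linarith [mul_le_mul_of_nonneg_left (hpq i) (hp j)]
    _ ≤ (∑ i, p i) * ∑ j, (q j - p j) :=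
        sum_sum_Ioi_mul_le_sum_mul_sum hp fun j => sub_nonneg.2 (hpq j)
    _ = (∑ i, p i) * (∑ i, q i) - (∑ i, p i) ^ 2 := by
        rw [sum_sub_distrib]
        ring

end

theorem ECH_index_nonneg_general (n : ℕ) (p q : Fin n → ℤ)
    (hp0 : ∀ i, 0 ≤ p i) (hpq : ∀ i, p i ≤ q i)
    (e : ℤ) (heQ : e ≤ ∑ i, q i) :
    0 ≤ (∑ i, q i) +
        ((∑ i, p i) * (∑ i, q i) - ∑ i, ∑ j ∈ Finset.Ioi i, (p i * q j - p j * q i)) -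
        (∑ i, p i) ^ 2 - e := by
  have := sum_sum_Ioi_cross_le hp0 hpq
  linarith

/-- Nonnegativity of the combinatorial ECH index
`I(α) = Q + PQ − Σ_{i<j}(pᵢqⱼ − pⱼqᵢ) − P² − e(α)` when `0 ≤ e(α) ≤ Q`. -/
theorem ECH_index_nonneg (n : ℕ) (p q : Fin n → ℤ)
    (hp0 : ∀ i, 0 ≤ p i) (hpq : ∀ i, p i ≤ q i) (hq : ∀ i, 0 < q i)
    (hord : ∀ i j : Fin n, i ≤ j → p j * q i ≤ p i * q j)
    (e : ℤ) (he0 : 0 ≤ e) (heQ : e ≤ ∑ i, q i) :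
    0 ≤ (∑ i, q i) +
        ((∑ i, p i) * (∑ i, q i) - ∑ i, ∑ j ∈ Finset.Ioi i, (p i * q j - p j * q i)) -
        (∑ i, p i) ^ 2 - e :=
  ECH_index_nonneg_general n p q hp0 hpq e heQ
end

section
/- With I(α) = Q + 2·Area(Λ_α) − P² − e(α) as above, I(α) = 0 if and only if e(α) = Q and 2·Area(Λ_α) = P², which happens exactly when every edge vector (pᵢ,qᵢ) is either (1,1) or (0,1) (i.e. every slope is 0 or 1) and all orbits are elliptic. -/
/-!
The index splits as `I(α) = (Q - e(α)) + (2·Area(Λ_α) - P²)`, where the first summand is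
nonnegative by assumption and the second is the sum of the nonnegative terms
`(qᵢ - pᵢ)(pᵢ + 2 ∑_{j > i} pⱼ)`. So `I(α) = 0` forces `e(α) = Q` and, for every `i`,
`pᵢ = qᵢ` or `pᵢ = 0`; coprimality turns these into `(pᵢ, qᵢ) = (1, 1)` or `(0, 1)`.
-/

open Finset

section
variable {ι : Type*} [Fintype ι] [LinearOrder ι] [LocallyFiniteOrderBot ι]
  [LocallyFiniteOrderTop ι]

theorem sum_sum_eq_sum_add_sum_Ioi {M : Type*} [AddCommMonoid M] (f : ι → ι → M) :
    ∑ i, ∑ j, f i j = ∑ i, (f i i + ∑ j ∈ Ioi i, (f i j + f j i)) := by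
  have hsplit (i : ι) : ∑ j, f i j = f i i + (∑ j ∈ Ioi i, f i j + ∑ j ∈ Iio i, f i j) := by
    rw [Fintype.sum_eq_add_sum_compl i, ← Ioi_disjUnion_Iio, sum_disjUnion]
  have hswap : ∑ i, ∑ j ∈ Iio i, f i j = ∑ i, ∑ j ∈ Ioi i, f j i :=
    sum_comm' (by simp)
  simp only [hsplit, sum_add_distrib, hswap]

theorem sum_mul_sum_sub_sum_Ioi_sub_sq {R : Type*} [CommRing R] (p q : ι → R) :
    (∑ i, p i) * (∑ i, q i) - ∑ i, ∑ j ∈ Ioi i, (p i * q j - p j * q i) - (∑ i, p i) ^ 2 =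
      ∑ i, (q i - p i) * (p i + 2 * ∑ j ∈ Ioi i, p j) := by
  rw [sq, sum_mul_sum, sum_mul_sum, sum_sum_eq_sum_add_sum_Ioi, sum_sum_eq_sum_add_sum_Ioi,
    ← sum_sub_distrib, ← sum_sub_distrib]
  refine sum_congr rfl fun i _ => ?_
  simp only [sum_add_distrib, sum_sub_distrib, ← sum_mul, ← mul_sum]
  ring

end

theorem eq_zero_or_eq_of_sub_mul_add_eq_zero {R : Type*} [CommRing R] [LinearOrder R]
    [IsStrictOrderedRing R] {p q s : R} (hp : 0 ≤ p) (hs : 0 ≤ s)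
    (h : (q - p) * (p + 2 * s) = 0) : p = 0 ∨ p = q := by
  rcases mul_eq_zero.mp h with h | h
  · exact .inr (sub_eq_zero.mp h).symm
  · exact .inl (le_antisymm (by linarith) hp)

theorem Int.eq_zero_one_or_one_one_of_isCoprime {p q : ℤ} (hq : 0 ≤ q) (hcop : IsCoprime p q)
    (h : p = 0 ∨ p = q) : (p = 0 ∧ q = 1) ∨ (p = 1 ∧ q = 1) := by
  rcases h with rfl | rfl
  · have := Int.isUnit_iff.mp (isCoprime_zero_left.mp hcop)
    omega
  · have := Int.isUnit_iff.mp (isCoprime_self.mp hcop)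
    omega

theorem ECH_index_zero_iff_general (n : ℕ) (p q : Fin n → ℤ)
    (hp0 : ∀ i, 0 ≤ p i) (hpq : ∀ i, p i ≤ q i)
    (hcop : ∀ i, IsCoprime (p i) (q i))
    (e : ℤ) (heQ : e ≤ ∑ i, q i) :
    (∑ i, q i) +
        ((∑ i, p i) * (∑ i, q i) - ∑ i, ∑ j ∈ Finset.Ioi i, (p i * q j - p j * q i)) -
        (∑ i, p i) ^ 2 - e = 0 ↔
      (e = ∑ i, q i ∧
        (∑ i, p i) * (∑ i, q i) - ∑ i, ∑ j ∈ Finset.Ioi i, (p i * q j - p j * q i) =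
          (∑ i, p i) ^ 2 ∧
        ∀ i, (p i = 0 ∧ q i = 1) ∨ (p i = 1 ∧ q i = 1)) := by
  have htail (i : Fin n) : 0 ≤ ∑ j ∈ Ioi i, p j := sum_nonneg fun j _ => hp0 j
  have hterm (i : Fin n) : 0 ≤ (q i - p i) * (p i + 2 * ∑ j ∈ Ioi i, p j) :=
    mul_nonneg (sub_nonneg.mpr (hpq i)) (by linarith [hp0 i, htail i])
  have hdefect := sum_mul_sum_sub_sum_Ioi_sub_sq p q
  have hdefect_nonneg := sum_nonneg fun i (_ : i ∈ univ) => hterm i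
  constructor
  · intro hI
    have hdefect_zero : ∑ i, (q i - p i) * (p i + 2 * ∑ j ∈ Ioi i, p j) = 0 := by linarith
    refine ⟨by linarith, by linarith, fun i => ?_⟩
    have hi := (sum_eq_zero_iff_of_nonneg fun i _ => hterm i).mp hdefect_zero i (mem_univ i)
    exact Int.eq_zero_one_or_one_one_of_isCoprime ((hp0 i).trans (hpq i)) (hcop i)
      (eq_zero_or_eq_of_sub_mul_add_eq_zero (hp0 i) (htail i) hi)
  · rintro ⟨rfl, hA, -⟩
    rw [hA]
    ring

/-- `I(α) = 0` iff `e(α) = Q` and `2·Area(Λ_α) = P²`, which happens exactly when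
every edge vector `(pᵢ, qᵢ)` is `(0,1)` or `(1,1)`. -/
theorem ECH_index_zero_iff (n : ℕ) (p q : Fin n → ℤ)
    (hp0 : ∀ i, 0 ≤ p i) (hpq : ∀ i, p i ≤ q i) (hq : ∀ i, 0 < q i)
    (hcop : ∀ i, IsCoprime (p i) (q i))
    (hord : ∀ i j : Fin n, i ≤ j → p j * q i ≤ p i * q j)
    (e : ℤ) (he0 : 0 ≤ e) (heQ : e ≤ ∑ i, q i) :
    (∑ i, q i) +
        ((∑ i, p i) * (∑ i, q i) - ∑ i, ∑ j ∈ Finset.Ioi i, (p i * q j - p j * q i)) -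
        (∑ i, p i) ^ 2 - e = 0 ↔
      (e = ∑ i, q i ∧
        (∑ i, p i) * (∑ i, q i) - ∑ i, ∑ j ∈ Finset.Ioi i, (p i * q j - p j * q i) =
          (∑ i, p i) ^ 2 ∧
        ∀ i, (p i = 0 ∧ q i = 1) ∨ (p i = 1 ∧ q i = 1)) :=
  ECH_index_zero_iff_general n p q hp0 hpq hcop e heQ
end
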